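/- Let X be an almost strongly zero-dimensional space, (Y,d) a metric space, and (f_n) a sequence of finite-valued maps f_n ∈ K₁(X,Y) converging uniformly to f : X → Y. Then f ∈ B₁(X,Y), i.e., f is a pointwise limit of a sequence of continuous maps from X to Y. -/

import Mathlib

open Set Filter Topology

def IsZeroSet {X : Type*} [TopologicalSpace X] (A : Set X) : Prop :=
  ∃ f : X → ℝ, Continuous f ∧ A = f ⁻¹' {0}

def IsCozeroSet {X : Type*} [TopologicalSpace X] (A : Set X) : Prop := IsZeroSet Aᶜ

def IsDiscreteFamily {X : Type*} [TopologicalSpace X] {ι : Type*} (U : ι → Set X) : Prop :=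
  ∀ x : X, ∃ V ∈ 𝓝 x, {i | (U i ∩ V).Nonempty}.Subsingleton

def IsSFDFamily {X : Type*} [TopologicalSpace X] {ι : Type*} (A : ι → Set X) : Prop :=
  ∃ U : ι → Set X, IsDiscreteFamily U ∧ (∀ i, IsCozeroSet (U i)) ∧ ∀ i, closure (A i) ⊆ U i

def IsSFDSetFamily {X : Type*} [TopologicalSpace X] (𝓐 : Set (Set X)) : Prop :=
  IsSFDFamily (fun A : 𝓐 => (A : Set X))

def IsBaseFor {X Y : Type*} [TopologicalSpace X] [TopologicalSpace Y]
    (𝓑 : Set (Set X)) (f : X → Y) : Prop :=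
  ∀ V : Set Y, IsOpen V → ∃ 𝓢 ⊆ 𝓑, f ⁻¹' V = ⋃₀ 𝓢

def FunctionallyFSigma {X : Type*} [TopologicalSpace X] (A : Set X) : Prop :=
  ∃ F : ℕ → Set X, (∀ n, IsZeroSet (F n)) ∧ A = ⋃ n, F n

def MemK1 {X Y : Type*} [TopologicalSpace X] [TopologicalSpace Y] (f : X → Y) : Prop :=
  ∀ V : Set Y, IsOpen V → FunctionallyFSigma (f ⁻¹' V)

def MemB1 {X Y : Type*} [TopologicalSpace X] [TopologicalSpace Y] (f : X → Y) : Prop :=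
  ∃ g : ℕ → X → Y, (∀ n, Continuous (g n)) ∧
    ∀ x, Tendsto (fun n => g n x) atTop (𝓝 (f x))

def MemSigmaF {X Y : Type*} [TopologicalSpace X] [TopologicalSpace Y] (f : X → Y) : Prop :=
  ∃ 𝓑 : ℕ → Set (Set X), (∀ n, IsSFDSetFamily (𝓑 n)) ∧ IsBaseFor (⋃ n, 𝓑 n) f

def MemSigmaF0 {X Y : Type*} [TopologicalSpace X] [TopologicalSpace Y] (f : X → Y) : Prop :=
  ∃ 𝓑 : ℕ → Set (Set X), (∀ n, IsSFDSetFamily (𝓑 n)) ∧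
    (∀ n, ∀ A ∈ 𝓑 n, IsZeroSet A) ∧ IsBaseFor (⋃ n, 𝓑 n) f

def CompletelySeparatedSets {X : Type*} [TopologicalSpace X] (A B : Set X) : Prop :=
  ∃ h : X → ℝ, Continuous h ∧ (∀ x, h x ∈ Icc (0:ℝ) 1) ∧
    (∀ x ∈ A, h x = 0) ∧ ∀ x ∈ B, h x = 1

def StronglyZeroDimensional (X : Type*) [TopologicalSpace X] : Prop :=
  ∀ A B : Set X, CompletelySeparatedSets A B → ∃ U : Set X, IsClopen U ∧ A ⊆ U ∧ U ⊆ Bᶜ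

def IsCSet {X : Type*} [TopologicalSpace X] (A : Set X) : Prop :=
  ∃ U : ℕ → Set X, (∀ n, IsClopen (U n)) ∧ A = ⋂ n, U n

def IsCSigmaSet {X : Type*} [TopologicalSpace X] (A : Set X) : Prop :=
  ∃ C : ℕ → Set X, (∀ n, IsCSet (C n)) ∧ A = ⋃ n, C n

def AlmostStronglyZeroDimensional (X : Type*) [TopologicalSpace X] : Prop :=
  ∀ A : Set X, IsZeroSet A → IsCSigmaSet A

def CountablyCompactIn {X : Type*} [TopologicalSpace X] (F : Set X) : Prop :=
  ∀ U : ℕ → Set X, (∀ n, IsOpen (U n)) → F ⊆ ⋃ n, U n →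
    ∃ s : Finset ℕ, F ⊆ ⋃ n ∈ s, U n

/-!
Each `F n` is constant on the fibres over its finitely many values; these fibres are preimages
of open sets, hence countable unions of C-sets, and choosing at stage `k` the first C-set whose
`k`-th clopen approximation contains a point gives locally constant maps that are eventually equal
to `F n` at every point. Uniform convergence thus provides, for every level `n`, locally constant
maps eventually `2⁻ⁿ`-close to `f`, but different levels settle at different stages. At stage `k`
we therefore evaluate the deepest level `m ≤ k` up to which the values form a geometric chain:
once levels `0, …, N` have settled, the chain condition carries the bound at level `N` up to `m`.
-/

section GeomChain

variable {Y : Type*} [PseudoMetricSpace Y]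

def IsGeomChainUpTo (v : ℕ → Y) (n : ℕ) : Prop :=
  ∀ i < n, dist (v i) (v (i + 1)) ≤ 2 * (1 / 2 : ℝ) ^ i

theorem IsGeomChainUpTo.dist_le {v : ℕ → Y} {m N : ℕ} (hv : IsGeomChainUpTo v m) (hNm : N ≤ m) :
    dist (v N) (v m) ≤ 4 * (1 / 2 : ℝ) ^ N :=
  calc dist (v N) (v m) ≤ ∑ i ∈ Finset.Ico N m, 2 * (1 / 2 : ℝ) ^ i :=
        dist_le_Ico_sum_of_dist_le hNm fun _ hi => hv _ hi
    _ = 2 * (1 / 2 : ℝ) ^ N * ∑ i ∈ Finset.range (m - N), (1 / 2 : ℝ) ^ i := by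
        rw [Finset.sum_Ico_eq_sum_range, Finset.mul_sum]
        simp only [pow_add]
        ring_nf
    _ ≤ 2 * (1 / 2 : ℝ) ^ N * 2 := by gcongr; exact sum_geometric_two_le _
    _ = 4 * (1 / 2 : ℝ) ^ N := by ring

theorem isGeomChainUpTo_of_forall_dist_le {v : ℕ → Y} {y : Y} {N : ℕ}
    (hv : ∀ n ≤ N, dist (v n) y ≤ (1 / 2 : ℝ) ^ n) : IsGeomChainUpTo v N := fun i hi =>
  calc dist (v i) (v (i + 1)) ≤ dist (v i) y + dist (v (i + 1)) y := dist_triangle_right _ _ _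
    _ ≤ (1 / 2 : ℝ) ^ i + (1 / 2 : ℝ) ^ (i + 1) := add_le_add (hv i hi.le) (hv (i + 1) hi)
    _ ≤ 2 * (1 / 2 : ℝ) ^ i := by rw [pow_succ]; linarith [pow_pos (one_half_pos (α := ℝ)) i]

theorem Nat.findGreatest_congr {P Q : ℕ → Prop} [DecidablePred P] [DecidablePred Q] {k : ℕ}
    (h : ∀ n ≤ k, (P n ↔ Q n)) : Nat.findGreatest P k = Nat.findGreatest Q k := by
  induction k with
  | zero => rfl
  | succ k ih =>
    rw [Nat.findGreatest_succ, Nat.findGreatest_succ,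
      if_congr (h (k + 1) le_rfl) rfl (ih fun n hn => h n (hn.trans k.le_succ))]

open Classical in
noncomputable def chainSelect (v : ℕ → Y) (k : ℕ) : Y :=
  v (Nat.findGreatest (IsGeomChainUpTo v) k)

theorem chainSelect_congr {v w : ℕ → Y} {k : ℕ} (h : ∀ n ≤ k, v n = w n) :
    chainSelect v k = chainSelect w k := by
  classical
  have hchain : ∀ n ≤ k, (IsGeomChainUpTo v n ↔ IsGeomChainUpTo w n) := fun n hn => by
    refine forall₂_congr fun i hi => ?_
    rw [h i (by omega), h (i + 1) (by omega)]
  unfold chainSelect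
  rw [Nat.findGreatest_congr hchain]
  exact h _ (Nat.findGreatest_le k)

theorem dist_chainSelect_le {v : ℕ → Y} {y : Y} {N k : ℕ} (hNk : N ≤ k)
    (hv : ∀ n ≤ N, dist (v n) y ≤ (1 / 2 : ℝ) ^ n) :
    dist (chainSelect v k) y ≤ 5 * (1 / 2 : ℝ) ^ N := by
  classical
  have hN := isGeomChainUpTo_of_forall_dist_le hv
  unfold chainSelect
  set m := Nat.findGreatest (IsGeomChainUpTo v) k
  have hm : IsGeomChainUpTo v m := Nat.findGreatest_spec hNk hN
  have hNm : N ≤ m := Nat.le_findGreatest hNk hN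
  calc dist (v m) y ≤ dist (v N) (v m) + dist (v N) y := dist_triangle_left _ _ _
    _ ≤ 4 * (1 / 2 : ℝ) ^ N + (1 / 2 : ℝ) ^ N := add_le_add (hm.dist_le hNm) (hv N le_rfl)
    _ = 5 * (1 / 2 : ℝ) ^ N := by ring

theorem memB1_of_isLocallyConstant_approx {X : Type*} [TopologicalSpace X] {g : ℕ → ℕ → X → Y}
    (hg : ∀ n k, IsLocallyConstant (g n k)) {f : X → Y}
    (hf : ∀ n x, ∀ᶠ k in atTop, dist (g n k x) (f x) ≤ (1 / 2 : ℝ) ^ n) : MemB1 f := by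
  refine ⟨fun k x => chainSelect (fun n => g n k x) k, fun k => ?_, fun x => ?_⟩
  · refine ((IsLocallyConstant.iff_eventually_eq _).2 fun x => ?_).continuous
    filter_upwards [(Finset.range (k + 1)).eventually_all.2 fun n _ => (hg n k).eventually_eq x]
      with y hy
    exact chainSelect_congr fun n hn => hy n (Finset.mem_range_succ_iff.2 hn)
  · refine Metric.tendsto_nhds.2 fun ε hε => ?_
    obtain ⟨N, hN⟩ := exists_pow_lt_of_lt_one (div_pos hε (by norm_num : (0 : ℝ) < 5))
      (by norm_num : (1 / 2 : ℝ) < 1)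
    filter_upwards [eventually_ge_atTop N,
      (Finset.range (N + 1)).eventually_all.2 fun n _ => hf n x] with k hk hfk
    calc dist (chainSelect (fun n => g n k x) k) (f x) ≤ 5 * (1 / 2 : ℝ) ^ N :=
          dist_chainSelect_le hk fun n hn => hfk n (Finset.mem_range_succ_iff.2 hn)
      _ < ε := by linarith

end GeomChain

section CSets

variable {X : Type*} [TopologicalSpace X]

theorem IsClopen.eventually_mem_iff {U : Set X} (hU : IsClopen U) (x : X) :
    ∀ᶠ y in 𝓝 x, (y ∈ U ↔ x ∈ U) := by
  by_cases hx : x ∈ U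
  · filter_upwards [hU.isOpen.mem_nhds hx] with y hy using iff_of_true hy hx
  · filter_upwards [hU.isClosed.isOpen_compl.mem_nhds hx] with y hy using iff_of_false hy hx

theorem IsCSet.exists_antitone_isClopen {D : Set X} (hD : IsCSet D) :
    ∃ V : ℕ → Set X, (∀ k, IsClopen (V k)) ∧ Antitone V ∧ D = ⋂ k, V k := by
  obtain ⟨U, hU, rfl⟩ := hD
  refine ⟨fun k => ⋂ t ∈ Finset.range (k + 1), U t,
    fun k => isClopen_biInter_finset fun t _ => hU t,
    fun a b hab => biInter_subset_biInter_left (by simpa using Nat.succ_le_succ hab), ?_⟩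
  ext x
  simp only [mem_iInter, Finset.mem_range]
  exact ⟨fun h k t _ => h t, fun h t => h t t (by omega)⟩

theorem IsCSigmaSet.iUnion {A : ℕ → Set X} (hA : ∀ n, IsCSigmaSet (A n)) :
    IsCSigmaSet (⋃ n, A n) := by
  choose C hC hAC using hA
  refine ⟨fun p => C p.unpair.1 p.unpair.2, fun p => hC _ _, ?_⟩
  simp only [hAC, Set.iUnion_unpair]

theorem exists_isLocallyConstant_eventually_mem_of_isCSet {D : ℕ → Set X}
    (hD : ∀ j, IsCSet (D j)) (hcov : ∀ x, ∃ j, x ∈ D j) :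
    ∃ σ : ℕ → X → ℕ, (∀ k, IsLocallyConstant (σ k)) ∧ ∀ x, ∀ᶠ k in atTop, x ∈ D (σ k x) := by
  choose V hV hanti hDV using fun j => (hD j).exists_antitone_isClopen
  -- `sInf ∅ = 0` covers the points that lie in none of the first `k + 1` approximations
  refine ⟨fun k x => sInf {j | j ≤ k ∧ x ∈ V j k}, fun k => ?_, fun x => ?_⟩
  · refine (IsLocallyConstant.iff_eventually_eq _).2 fun x => ?_
    filter_upwards [(Finset.range (k + 1)).eventually_all.2
      fun j _ => (hV j k).eventually_mem_iff x] with y hy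
    congr 1
    ext j
    simp only [mem_ofPred_eq]
    exact and_congr_right fun hj => hy j (Finset.mem_range_succ_iff.2 hj)
  · set j₀ := sInf {j | x ∈ D j}
    have hj₀ : x ∈ D j₀ := Nat.sInf_mem (hcov x)
    have hexit : ∀ j < j₀, ∀ᶠ k in atTop, x ∉ V j k := fun j hj => by
      obtain ⟨t, ht⟩ : ∃ t, x ∉ V j t := by
        simpa [hDV j] using Nat.notMem_of_lt_sInf hj
      exact eventually_atTop.2 ⟨t, fun k hk hxk => ht (hanti j hk hxk)⟩
    filter_upwards [(Finset.range j₀).eventually_all.2 fun j hj => hexit j (Finset.mem_range.1 hj),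
      eventually_ge_atTop j₀] with k hk hjk
    have hmem : j₀ ∈ {j | j ≤ k ∧ x ∈ V j k} := ⟨hjk, mem_iInter.1 (hDV j₀ ▸ hj₀) k⟩
    have hσ : sInf {j | j ≤ k ∧ x ∈ V j k} = j₀ := le_antisymm (Nat.sInf_le hmem)
      (le_csInf ⟨j₀, hmem⟩ fun j hj => not_lt.1 fun hlt => hk j (Finset.mem_range.2 hlt) hj.2)
    simpa only [hσ] using hj₀

theorem exists_isLocallyConstant_eventually_mem_of_isCSigmaSet {ι : Type*} [Countable ι]
    {A : ι → Set X} (hA : ∀ i, IsCSigmaSet (A i)) (hcov : ∀ x, ∃ i, x ∈ A i) :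
    ∃ σ : ℕ → X → ι, (∀ k, IsLocallyConstant (σ k)) ∧ ∀ x, ∀ᶠ k in atTop, x ∈ A (σ k x) := by
  rcases isEmpty_or_nonempty ι with hι | hι
  · have : IsEmpty X := ⟨fun x => (hcov x).elim fun i _ => isEmptyElim i⟩
    exact ⟨fun _ => isEmptyElim, fun _ => .of_constant _ isEmptyElim, isEmptyElim⟩
  choose C hC hAC using hA
  obtain ⟨e, he⟩ := exists_surjective_nat (ι × ℕ)
  have hcovC : ∀ x, ∃ j, x ∈ C (e j).1 (e j).2 := fun x => by
    obtain ⟨i, hi⟩ := hcov x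
    obtain ⟨t, ht⟩ := mem_iUnion.1 (hAC i ▸ hi)
    obtain ⟨j, hj⟩ := he (i, t)
    exact ⟨j, by rwa [hj]⟩
  obtain ⟨σ, hσ, hσmem⟩ :=
    exists_isLocallyConstant_eventually_mem_of_isCSet (fun j => hC _ _) hcovC
  refine ⟨fun k x => (e (σ k x)).1, fun k => (hσ k).comp fun j => (e j).1, fun x => ?_⟩
  filter_upwards [hσmem x] with k hk
  exact hAC _ ▸ mem_iUnion_of_mem _ hk

theorem AlmostStronglyZeroDimensional.isCSigmaSet_of_functionallyFSigma
    (hX : AlmostStronglyZeroDimensional X) {A : Set X} (hA : FunctionallyFSigma A) :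
    IsCSigmaSet A := by
  obtain ⟨Z, hZ, rfl⟩ := hA
  exact IsCSigmaSet.iUnion fun n => hX _ (hZ n)

theorem MemK1.isCSigmaSet_preimage_singleton {Y : Type*} [TopologicalSpace Y] [T1Space Y]
    (hX : AlmostStronglyZeroDimensional X) {F : X → Y} (hF : MemK1 F) (hfin : (range F).Finite)
    (y : Y) : IsCSigmaSet (F ⁻¹' {y}) := by
  have hfiber : F ⁻¹' {y} = F ⁻¹' (range F \ {y})ᶜ := by
    ext x
    simp
  rw [hfiber]
  exact hX.isCSigmaSet_of_functionallyFSigma (hF _ (hfin.sdiff (t := {y})).isClosed.isOpen_compl)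

theorem MemK1.exists_isLocallyConstant_eventually_eq {Y : Type*} [TopologicalSpace Y]
    [T1Space Y] (hX : AlmostStronglyZeroDimensional X) {F : X → Y} (hF : MemK1 F)
    (hfin : (range F).Finite) :
    ∃ g : ℕ → X → Y, (∀ k, IsLocallyConstant (g k)) ∧ ∀ x, ∀ᶠ k in atTop, g k x = F x := by
  have : Countable (range F) := hfin.countable.to_subtype
  obtain ⟨σ, hσ, hσmem⟩ := exists_isLocallyConstant_eventually_mem_of_isCSigmaSet
    (A := fun y : range F => F ⁻¹' {(y : Y)}) (fun y => hF.isCSigmaSet_preimage_singleton hX hfin y)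
    fun x => ⟨⟨F x, mem_range_self x⟩, rfl⟩
  exact ⟨fun k x => σ k x, fun k => (hσ k).comp _, fun x => (hσmem x).mono fun _ hk => hk.symm⟩

end CSets

theorem stmt16 {X Y : Type*} [TopologicalSpace X] [MetricSpace Y]
    (hX : AlmostStronglyZeroDimensional X) (f : X → Y) (F : ℕ → X → Y)
    (hfin : ∀ n, (Set.range (F n)).Finite) (hK : ∀ n, MemK1 (F n))
    (hu : TendstoUniformly F f Filter.atTop) : MemB1 f := by
  choose φ hφ using fun n : ℕ =>
    (Metric.tendstoUniformly_iff.1 hu _ (pow_pos (one_half_pos (α := ℝ)) n)).exists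
  choose g hg hgF using fun n => (hK (φ n)).exists_isLocallyConstant_eventually_eq hX (hfin (φ n))
  refine memB1_of_isLocallyConstant_approx hg fun n x => (hgF n x).mono fun k hk => ?_
  rw [hk, dist_comm]
  exact (hφ n x).le
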